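/- Let A be a k-quasihyponormal bounded operator on a complex Hilbert space (k a positive integer). Then for every real number a and all x, ⟨(A*²A² − aA*A + a²I)A^k x, A^k x⟩ ≥ 0. -/

import Mathlib

/-!
With `y = A^k x` the quadratic form equals `‖A²y‖² - a‖Ay‖² + a²‖y‖²`. Cauchy–Schwarz gives
`‖Ay‖² = ⟪A*Ay, y⟫ ≤ ‖A*Ay‖‖y‖`, and since `A*Ay = A*A^k(Ax)`, k-quasihyponormality bounds
`‖A*Ay‖` by `‖A^{k+1}(Ax)‖ = ‖A²y‖`. So `a‖Ay‖² ≤ |a|‖A²y‖‖y‖`, which AM–GM bounds by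
`(‖A²y‖² + a²‖y‖²)/2`.
-/

open ContinuousLinearMap
open scoped InnerProductSpace

variable {H : Type*} [NormedAddCommGroup H] [InnerProductSpace ℂ H] [CompleteSpace H]

theorem sq_sub_mul_sq_add_sq_nonneg {s t u : ℝ} (h : u ^ 2 ≤ s * t) (a : ℝ) :
    0 ≤ s ^ 2 - a * u ^ 2 + a ^ 2 * t ^ 2 := by
  have hu : a * u ^ 2 ≤ |a| * (s * t) :=
    (mul_le_mul_of_nonneg_right (le_abs_self a) (sq_nonneg u)).trans
      (mul_le_mul_of_nonneg_left h (abs_nonneg a))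
  have amgm : 2 * s * (|a| * t) ≤ s ^ 2 + (|a| * t) ^ 2 := two_mul_le_add_sq _ _
  nlinarith [sq_abs a, sq_nonneg s, sq_nonneg (a * t)]

namespace ContinuousLinearMap

variable {𝕜 E F : Type*} [RCLike 𝕜] [NormedAddCommGroup E] [InnerProductSpace 𝕜 E]
  [CompleteSpace E] [NormedAddCommGroup F] [InnerProductSpace 𝕜 F] [CompleteSpace F]

theorem apply_norm_sq_le_norm_adjoint_apply_mul_norm (A : E →L[𝕜] F) (x : E) :
    ‖A x‖ ^ 2 ≤ ‖adjoint A (A x)‖ * ‖x‖ := by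
  rw [apply_norm_sq_eq_inner_adjoint_left]
  exact re_inner_le_norm _ _

theorem re_inner_adjoint_sq_mul_sq_sub_add_apply (A : E →L[𝕜] E) (a : ℝ) (x : E) :
    RCLike.re ⟪(adjoint A ^ 2 * A ^ 2 - (a : 𝕜) • (adjoint A * A) +
        ((a : 𝕜) ^ 2) • (1 : E →L[𝕜] E)) x, x⟫_𝕜 =
      ‖(A ^ 2) x‖ ^ 2 - a * ‖A x‖ ^ 2 + a ^ 2 * ‖x‖ ^ 2 := by
  simp only [add_apply, sub_apply, smul_apply, mul_apply_eq_comp, sq,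
    inner_add_left, inner_sub_left, inner_smul_left, adjoint_inner_left]
  simp only [inner_self_eq_norm_sq_to_K, RCLike.conj_ofReal, map_mul, one_apply_eq_self, map_add,
    map_sub, RCLike.re_ofReal_pow, RCLike.mul_re, RCLike.ofReal_re, RCLike.ofReal_im,
    RCLike.im_ofReal_pow, mul_zero, sub_zero, RCLike.mul_im, zero_mul, add_zero]
  ring

def IsQuasihyponormal (k : ℕ) (A : E →L[𝕜] E) : Prop :=
  ∀ x, ‖(adjoint A * A ^ k) x‖ ≤ ‖(A ^ (k + 1)) x‖

theorem IsQuasihyponormal.norm_apply_sq_le {k : ℕ} {A : E →L[𝕜] E}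
    (hA : IsQuasihyponormal k A) (x : E) :
    ‖A ((A ^ k) x)‖ ^ 2 ≤ ‖(A ^ 2) ((A ^ k) x)‖ * ‖(A ^ k) x‖ := by
  have hcomm : A ((A ^ k) x) = (A ^ k) (A x) := by
    rw [← mul_apply_eq_comp, ← mul_apply_eq_comp, ← pow_succ', pow_succ]
  have hshift : (A ^ 2) ((A ^ k) x) = (A ^ (k + 1)) (A x) := by
    rw [← mul_apply_eq_comp, ← mul_apply_eq_comp, ← pow_add, ← pow_succ, add_comm]
  have hadj : ‖adjoint A (A ((A ^ k) x))‖ ≤ ‖(A ^ 2) ((A ^ k) x)‖ := by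
    rw [hcomm, hshift]
    exact hA (A x)
  exact (apply_norm_sq_le_norm_adjoint_apply_mul_norm A _).trans
    (mul_le_mul_of_nonneg_right hadj (norm_nonneg _))

end ContinuousLinearMap

theorem stmt18_general (A : H →L[ℂ] H) (k : ℕ)
    (hA : ∀ x : H, ‖(adjoint A * A ^ k) x‖ ≤ ‖(A ^ (k + 1)) x‖) :
    ∀ (a : ℝ) (x : H),
      0 ≤ RCLike.re (⟪((adjoint A) ^ 2 * A ^ 2 - (a : ℂ) • (adjoint A * A) +
          ((a : ℂ) ^ 2) • (1 : H →L[ℂ] H)) ((A ^ k) x), (A ^ k) x⟫_ℂ) := by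
  intro a x
  have hq : IsQuasihyponormal k A := hA
  exact (sq_sub_mul_sq_add_sq_nonneg (hq.norm_apply_sq_le x) a).trans_eq
    (re_inner_adjoint_sq_mul_sq_sub_add_apply A a _).symm

/-- A k-quasihyponormal ⟹ ⟨(A*²A² − aA*A + a²I)A^k x, A^k x⟩ ≥ 0 for all real a. -/
theorem stmt18 (A : H →L[ℂ] H) (k : ℕ) (hk : 0 < k)
    (hA : ∀ x : H, ‖(adjoint A * A ^ k) x‖ ≤ ‖(A ^ (k + 1)) x‖) :
    ∀ (a : ℝ) (x : H),
      0 ≤ RCLike.re (⟪((adjoint A) ^ 2 * A ^ 2 - (a : ℂ) • (adjoint A * A) +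
          ((a : ℂ) ^ 2) • (1 : H →L[ℂ] H)) ((A ^ k) x), (A ^ k) x⟫_ℂ) :=
  stmt18_general A k hA
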